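/- arXiv:2505.02682 — 5 statements merged into one kernel-verified Lean document; each statement's English description precedes it below -/
import Mathlib

section
/- Let g ∈ H↑ (a nondecreasing ℕ-valued weight function) and let f be an unbounded modulus function. If the sequence {f(k)/f(g(k))}_{k∈ℕ} is bounded, then Z(f) ⊆ Z_g(f). -/
open Filter Topology

/-- `cnt C k` is the number of elements of `C` in `[0, k-1]`. -/
noncomputable def cnt (C : Set ℕ) (k : ℕ) : ℕ := (C ∩ Set.Iio k).ncard

/-- A modulus function `f : [0,∞) → [0,∞)`: nonnegative, increasing, subadditive,
vanishing exactly at `0`, and right continuous at `0`. -/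
def IsModulus (f : ℝ → ℝ) : Prop :=
  (∀ x, 0 ≤ x → 0 ≤ f x) ∧ MonotoneOn f (Set.Ici 0) ∧
  (∀ x y, 0 ≤ x → 0 ≤ y → f (x + y) ≤ f x + f y) ∧
  (∀ x, 0 ≤ x → (f x = 0 ↔ x = 0)) ∧ ContinuousWithinAt f (Set.Ici 0) 0

/-- `f` is unbounded on `[0,∞)`. -/
def IsUnboundedMod (f : ℝ → ℝ) : Prop := ∀ M : ℝ, ∃ x : ℝ, 0 ≤ x ∧ M < f x

/-- `H↑`: nondecreasing `ℕ`-valued weight functions, i.e. monotone `g : ℕ → ℕ`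
with `g(k) → ∞` and `k / g(k)` not converging to `0`. -/
def InHup (g : ℕ → ℕ) : Prop :=
  Monotone g ∧ Tendsto g atTop atTop ∧
  ¬ Tendsto (fun k : ℕ => (k : ℝ) / (g k : ℝ)) atTop (nhds 0)

/-- The modular simple density ideal `Z_g(f)` for a `ℕ`-valued weight function. -/
def ZgfN (f : ℝ → ℝ) (g : ℕ → ℕ) : Set (Set ℕ) :=
  {C | Tendsto (fun k => f (cnt C k) / f (g k : ℝ)) atTop (nhds 0)}

theorem stmt14 (f : ℝ → ℝ) (g : ℕ → ℕ) (hf : IsModulus f) (hfu : IsUnboundedMod f)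
    (hg : InHup g) (hbd : ∃ M : ℝ, ∀ k : ℕ, f (k : ℝ) / f (g k : ℝ) ≤ M) :
    {C : Set ℕ | Tendsto (fun k => f (cnt C k) / f (k : ℝ)) atTop (nhds 0)} ⊆ ZgfN f g := by
  obtain ⟨M, hM⟩ := hbd
  intro C hC
  obtain ⟨hnn, hmono, hsub, hzero, hcont⟩ := hf
  have hpos : ∀ x : ℝ, 0 < x → 0 < f x := by
    intro x hx
    rcases lt_or_eq_of_le (hnn x hx.le) with h | h
    · exact h
    · exact absurd ((hzero x hx.le).1 h.symm) (by positivity)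
  have hgk : ∀ᶠ k in atTop, 1 ≤ g k := hg.2.1.eventually_ge_atTop 1
  have key : ∀ᶠ k in atTop,
      f (cnt C k) / f (g k : ℝ) ≤ M * (f (cnt C k) / f (k : ℝ)) := by
    filter_upwards [hgk, eventually_ge_atTop 1] with k hk1 hk2
    have hfk : 0 < f (k : ℝ) := hpos _ (by exact_mod_cast hk2)
    have hfg : 0 < f (g k : ℝ) := hpos _ (by exact_mod_cast hk1)
    have hfc : 0 ≤ f (cnt C k : ℝ) := hnn _ (by positivity)
    have heq : f (cnt C k) / f (g k : ℝ)
        = (f (cnt C k) / f (k : ℝ)) * (f (k : ℝ) / f (g k : ℝ)) := by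
      field_simp
    rw [heq, mul_comm M _]
    exact mul_le_mul_of_nonneg_left (hM k) (by positivity)
  have hlo : ∀ᶠ k in atTop, 0 ≤ f (cnt C k) / f (g k : ℝ) := by
    filter_upwards [hgk] with k hk1
    have hfg : 0 < f (g k : ℝ) := hpos _ (by exact_mod_cast hk1)
    have hfc : 0 ≤ f (cnt C k : ℝ) := hnn _ (by positivity)
    positivity
  have hM0 : Tendsto (fun k => M * (f (cnt C k) / f (k : ℝ))) atTop (nhds 0) := by
    simpa using hC.const_mul M
  exact squeeze_zero' hlo key hM0
end

section
/- Let g : ℕ → ℕ be the function defined by g(k) = 1 for k ≤ 4 and g(k) = 2^m for 4^m < k ≤ 4^{m+1} (m > 1), and let f(x) = log(1+x). Then the sequence {k/g(k)}_{k∈ℕ} is unbounded, yet the sequence {f(k)/f(g(k))}_{k∈ℕ} is bounded (so that, by the criterion for the associated submeasures, sup_{m∈ℕ} φ_m(ℕ) < ∞). -/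
open Filter Topology

/-- The submeasure `φ_m` associated with `f`, `g` and the scale sequence `kk`:
`φ_m(C) = f(|C ∩ [k_m, k_{m+1})|) / f(g(k_m))`. -/
noncomputable def phi (f : ℝ → ℝ) (g : ℕ → ℕ) (kk : ℕ → ℕ) (m : ℕ) (C : Set ℕ) : ℝ :=
  f (((C ∩ Set.Ico (kk m) (kk (m + 1))).ncard : ℝ)) / f (g (kk m) : ℝ)

/-- The weight function with `g(k) = 1` for `k ≤ 4` and `g(k) = 2^m` for
`4^m < k ≤ 4^(m+1)`. -/
noncomputable def gEx (k : ℕ) : ℕ := if k ≤ 4 then 1 else 2 ^ Nat.log 4 (k - 1)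

/-- The modulus function `f(x) = log(1+x)`. -/
noncomputable def fLog (x : ℝ) : ℝ := Real.log (1 + x)

/-! For `4 ^ m < k ≤ 4 ^ (m + 1)` we have `gEx k = 2 ^ m`, so `k / gEx k = 4 * 2 ^ m` at `k = 4 ^ (m + 1)`,
while `k ≤ 4 * gEx k ^ 2` and `1 + 4 y ^ 2 ≤ (1 + y) ^ 3` give `fLog k ≤ 3 * fLog (gEx k)`.

The bound on `φ_m(ℕ)` needs only such an inequality `f k ≤ C * f (g k)`: the block
`[k_m, k_{m+1})` has at most `k_{m+1}` elements, and by subadditivity and minimality of `k_{m+1}`,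
`f (k_{m+1}) ≤ f 1 + C * f (g (k_{m+1} - 1)) ≤ f 1 + C * 2 ^ (m + 1)`, whereas the denominator
`f (g (k_m))` is at least `2 ^ m`. -/

open Set

section Criterion

variable {f : ℝ → ℝ} {g : ℕ → ℕ} {kk : ℕ → ℕ} {C : ℝ}

theorem pow_le_of_eq_sInf (hunb : ∀ M : ℝ, ∃ k, M ≤ f (g k)) {m n : ℕ}
    (hn : n = sInf {k : ℕ | (2 : ℝ) ^ m ≤ f (g k : ℝ)}) : (2 : ℝ) ^ m ≤ f (g n) :=
  hn ▸ Nat.sInf_mem (hunb _)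

theorem lt_pow_of_lt_eq_sInf {m n k : ℕ}
    (hn : n = sInf {k : ℕ | (2 : ℝ) ^ m ≤ f (g k : ℝ)}) (hk : k < n) : f (g k) < (2 : ℝ) ^ m :=
  not_le.mp (Nat.notMem_of_lt_sInf (hn ▸ hk))

theorem le_add_mul_of_forall_lt (hmono : MonotoneOn f (Ici 0))
    (hsub : ∀ x y, 0 ≤ x → 0 ≤ y → f (x + y) ≤ f x + f y) (hC0 : 0 ≤ C)
    (hC : ∀ k : ℕ, f k ≤ C * f (g k)) {n : ℕ} {B : ℝ} (hB : 0 ≤ B)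
    (hup : ∀ k < n, f (g k) ≤ B) : f n ≤ f 1 + C * B := by
  cases n with
  | zero =>
    have : f 0 ≤ f 1 := hmono (mem_Ici.mpr le_rfl) (mem_Ici.mpr zero_le_one) zero_le_one
    push_cast
    linarith [mul_nonneg hC0 hB]
  | succ j =>
    have hj : f (j + 1) ≤ f j + f 1 := hsub _ _ j.cast_nonneg zero_le_one
    have hg : C * f (g j) ≤ C * B := mul_le_mul_of_nonneg_left (hup j j.lt_succ_self) hC0
    push_cast
    linarith [hC j]

theorem phi_univ_le (hf0 : ∀ x, 0 ≤ x → 0 ≤ f x) (hmono : MonotoneOn f (Ici 0))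
    (hsub : ∀ x y, 0 ≤ x → 0 ≤ y → f (x + y) ≤ f x + f y) (hC0 : 0 ≤ C)
    (hC : ∀ k : ℕ, f k ≤ C * f (g k)) {m : ℕ} (hlow : (2 : ℝ) ^ m ≤ f (g (kk m)))
    (hup : ∀ k < kk (m + 1), f (g k) ≤ (2 : ℝ) ^ (m + 1)) :
    phi f g kk m univ ≤ f 1 + 2 * C := by
  have hcard : (univ ∩ Ico (kk m) (kk (m + 1))).ncard = kk (m + 1) - kk m := by
    rw [univ_inter, ncard_eq_toFinset_card', toFinset_Ico, Nat.card_Ico]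
  have hnum : f (kk (m + 1) - kk m : ℕ) ≤ f 1 + C * 2 ^ (m + 1) :=
    le_add_mul_of_forall_lt hmono hsub hC0 hC (by positivity)
      fun k hk => hup k (hk.trans_le (Nat.sub_le _ _))
  have hf1 : 0 ≤ f 1 := hf0 1 zero_le_one
  have hpow : (1 : ℝ) ≤ 2 ^ m := one_le_pow₀ one_le_two
  rw [phi, hcard]
  refine div_le_of_le_mul₀ (hf0 _ (Nat.cast_nonneg _)) (by positivity) ?_
  calc f (kk (m + 1) - kk m : ℕ) ≤ f 1 + C * 2 ^ (m + 1) := hnum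
    _ ≤ (f 1 + 2 * C) * 2 ^ m := by rw [pow_succ]; linarith [mul_le_mul_of_nonneg_left hpow hf1]
    _ ≤ (f 1 + 2 * C) * f (g (kk m)) := by gcongr

theorem exists_phi_univ_le (hf0 : ∀ x, 0 ≤ x → 0 ≤ f x) (hmono : MonotoneOn f (Ici 0))
    (hsub : ∀ x y, 0 ≤ x → 0 ≤ y → f (x + y) ≤ f x + f y) (hC0 : 0 ≤ C)
    (hC : ∀ k : ℕ, f k ≤ C * f (g k)) (hunb : ∀ M : ℝ, ∃ k, M ≤ f (g k))
    (hkk : ∀ m : ℕ, 1 ≤ m → kk m = sInf {k : ℕ | (2 : ℝ) ^ m ≤ f (g k : ℝ)}) :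
    ∃ M : ℝ, ∀ m : ℕ, phi f g kk m univ ≤ M := by
  refine ⟨max (phi f g kk 0 univ) (f 1 + 2 * C), fun m => ?_⟩
  rcases m with _ | m
  · exact le_max_left _ _
  · refine (phi_univ_le hf0 hmono hsub hC0 hC ?_ ?_).trans (le_max_right _ _)
    · exact pow_le_of_eq_sInf hunb (hkk _ m.succ_pos)
    · exact fun k hk => (lt_pow_of_lt_eq_sInf (hkk _ (m + 1).succ_pos) hk).le

end Criterion

theorem fLog_nonneg {x : ℝ} (hx : 0 ≤ x) : 0 ≤ fLog x :=
  Real.log_nonneg (by linarith)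

theorem fLog_monotoneOn : MonotoneOn fLog (Ici 0) := fun x hx _ _ hxy =>
  Real.log_le_log (by linarith [mem_Ici.mp hx]) (by linarith)

theorem fLog_add_le {x y : ℝ} (hx : 0 ≤ x) (hy : 0 ≤ y) : fLog (x + y) ≤ fLog x + fLog y := by
  unfold fLog
  rw [← Real.log_mul (by linarith) (by linarith)]
  exact Real.log_le_log (by linarith) (by nlinarith)

theorem fLog_le_three_mul {x y : ℝ} (hx : 0 ≤ x) (hy : 0 ≤ y) (h : x ≤ 4 * y ^ 2) :
    fLog x ≤ 3 * fLog y := by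
  unfold fLog
  rw [show 3 * Real.log (1 + y) = Real.log ((1 + y) ^ 3) by rw [Real.log_pow]; norm_num]
  exact Real.log_le_log (by linarith) (by nlinarith [sq_nonneg (y - 1)])

theorem gEx_eq_two_pow_log (k : ℕ) : gEx k = 2 ^ Nat.log 4 (k - 1) := by
  unfold gEx
  split_ifs with hk
  · rw [Nat.log_of_lt (by omega), pow_zero]
  · rfl

theorem gEx_four_pow_succ (j : ℕ) : gEx (4 ^ (j + 1)) = 2 ^ j := by
  have hlt : 4 ^ j < 4 ^ (j + 1) := Nat.pow_lt_pow_right (by norm_num) j.lt_succ_self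
  rw [gEx_eq_two_pow_log, Nat.log_eq_of_pow_le_of_lt_pow (m := j) (by omega) (by omega)]

theorem cast_four_pow_succ_div_gEx (j : ℕ) :
    ((4 ^ (j + 1) : ℕ) : ℝ) / (gEx (4 ^ (j + 1)) : ℝ) = 4 * 2 ^ j := by
  rw [gEx_four_pow_succ]
  push_cast
  rw [show (4 : ℝ) = 2 ^ 2 by norm_num, ← pow_mul]
  field_simp
  ring

theorem le_four_mul_gEx_sq (k : ℕ) : k ≤ 4 * gEx k ^ 2 := by
  have hk := Nat.lt_pow_succ_log_self (show 1 < 4 by norm_num) (k - 1)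
  rw [gEx_eq_two_pow_log, ← pow_mul, pow_mul', show 2 ^ 2 = 4 by rfl]
  rw [pow_succ] at hk
  omega

theorem fLog_le_three_mul_fLog_gEx (k : ℕ) : fLog k ≤ 3 * fLog (gEx k) :=
  fLog_le_three_mul k.cast_nonneg (gEx k).cast_nonneg (by exact_mod_cast le_four_mul_gEx_sq k)

theorem exists_le_fLog_gEx (M : ℝ) : ∃ k, M ≤ fLog (gEx k) := by
  obtain ⟨j, hj⟩ := pow_unbounded_of_one_lt (Real.exp M) one_lt_two
  refine ⟨4 ^ (j + 1), ?_⟩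
  rw [gEx_four_pow_succ, fLog, Real.le_log_iff_exp_le (by positivity)]
  push_cast
  linarith

theorem stmt15_general (kk : ℕ → ℕ)
    (hkk : ∀ m : ℕ, 1 ≤ m → kk m = sInf {k : ℕ | (2 : ℝ) ^ m ≤ fLog (gEx k : ℝ)}) :
    (¬ ∃ M : ℝ, ∀ k : ℕ, (k : ℝ) / (gEx k : ℝ) ≤ M) ∧
    (∃ M : ℝ, ∀ k : ℕ, fLog (k : ℝ) / fLog (gEx k : ℝ) ≤ M) ∧
    (∃ M : ℝ, ∀ m : ℕ, phi fLog gEx kk m Set.univ ≤ M) := by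
  refine ⟨?_, ⟨3, fun k => ?_⟩, exists_phi_univ_le (fun _ => fLog_nonneg) fLog_monotoneOn
    (fun _ _ => fLog_add_le) zero_le_three fLog_le_three_mul_fLog_gEx exists_le_fLog_gEx hkk⟩
  · rintro ⟨M, hM⟩
    obtain ⟨j, hj⟩ := pow_unbounded_of_one_lt M one_lt_two
    have := hM (4 ^ (j + 1))
    rw [cast_four_pow_succ_div_gEx] at this
    linarith [pow_pos (two_pos : (0 : ℝ) < 2) j]
  · exact div_le_of_le_mul₀ (fLog_nonneg (Nat.cast_nonneg _)) zero_le_three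
      (fLog_le_three_mul_fLog_gEx k)

theorem stmt15 (kk : ℕ → ℕ) (hkk0 : kk 0 = 0)
    (hkk : ∀ m : ℕ, 1 ≤ m → kk m = sInf {k : ℕ | (2 : ℝ) ^ m ≤ fLog (gEx k : ℝ)}) :
    (¬ ∃ M : ℝ, ∀ k : ℕ, (k : ℝ) / (gEx k : ℝ) ≤ M) ∧
    (∃ M : ℝ, ∀ k : ℕ, fLog (k : ℝ) / fLog (gEx k : ℝ) ≤ M) ∧
    (∃ M : ℝ, ∀ m : ℕ, phi fLog gEx kk m Set.univ ≤ M) :=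
  stmt15_general kk hkk
end

section
/- Let g : ℕ → ℕ be the function defined by g(k) = 1 for k ≤ 4 and g(k) = 2^m for 4^m < k ≤ 4^{m+1} (m > 1), and let f(x) = log(1+x). Then Z_g(f) is not a simple density ideal: for every h ∈ H (ℕ-valued weight function), Z_g(f) ≠ Z_h, where Z_h = {C ⊆ ℕ : limsup_{k→∞} |C ∩ [0,k-1]|/h(k) = 0}. -/
/-!
For `k ≥ 5` we have `f(g(k)) ≤ log k ≤ 4 f(g(k))`, so `Z_g(f)` consists of the sets `C` with
`log (1 + |C ∩ [0,k)|) = o(log k)`.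

If `k ≤ h(k)^(n+1)` eventually, the set whose counting function is the integer `2(n+1)`-th root
of `k` lies in `Z_h` but not in `Z_g(f)`. Otherwise, for every `n`, `h(k)^(n+2) < k` for
infinitely many `k`; picking such points `κ n` far apart, with `h (κ (n+1)) > κ n`, the union
of the blocks of length `h (κ n)` ending at `κ n` has counting function `k^o(1)` (between
`κ n` and `κ (n+1)` it is at most twice the length of the last block met) but reaches
`h (κ n)` at `κ n`, so it lies in `Z_g(f)` but not in `Z_h`.
-/

open Filter Topology

/-- Membership in `H`: a `ℕ`-valued weight function. -/
def InH (h : ℕ → ℕ) : Prop :=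
  Tendsto h atTop atTop ∧ ¬ Tendsto (fun k : ℕ => (k : ℝ) / (h k : ℝ)) atTop (nhds 0)

/-- The simple density ideal `Z_h`. -/
def Zh (h : ℕ → ℕ) : Set (Set ℕ) :=
  {C | Tendsto (fun k => (cnt C k : ℝ) / (h k : ℝ)) atTop (nhds 0)}

open Asymptotics Finset

lemma cnt_eq_card_filter (C : Set ℕ) [DecidablePred (· ∈ C)] (k : ℕ) :
    cnt C k = ((range k).filter (· ∈ C)).card := by
  rw [cnt, ← Set.ncard_coe_finset]
  congr 1
  ext j
  simp [and_comm]

lemma cnt_setOf_lt_succ {a : ℕ → ℕ} (ha0 : a 0 = 0) (hmono : Monotone a)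
    (hstep : ∀ k, a (k + 1) ≤ a k + 1) (k : ℕ) : cnt {j | a j < a (j + 1)} k = a k := by
  classical
  rw [cnt_eq_card_filter, card_filter]
  calc ∑ j ∈ range k, (if j ∈ {j | a j < a (j + 1)} then 1 else 0)
      = ∑ j ∈ range k, (a (j + 1) - a j) := by
        refine sum_congr rfl fun j _ => ?_
        have := hmono j.le_succ
        have := hstep j
        simp only [Set.mem_ofPred_eq]
        split_ifs <;> omega
    _ = a k := by rw [sum_range_tsub hmono, ha0, Nat.sub_zero]

lemma exists_cnt_pow_le_lt (p : ℕ) (hp : p ≠ 0) :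
    ∃ C : Set ℕ, ∀ k, cnt C k ^ p ≤ k ∧ k < (cnt C k + 1) ^ p := by
  have hroot : ∀ k, ∃ m, m ^ p ≤ k ∧ k < (m + 1) ^ p := by
    intro k
    have hex : ∃ m, k < (m + 1) ^ p := ⟨k, k.lt_succ_self.trans_le (Nat.le_self_pow hp _)⟩
    refine ⟨Nat.find hex, ?_, Nat.find_spec hex⟩
    rcases Nat.eq_zero_or_eq_succ_pred (Nat.find hex) with h0 | hsucc
    · rw [h0, zero_pow hp]
      exact k.zero_le
    · rw [hsucc]
      exact not_lt.1 (Nat.find_min hex (by omega))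
  choose a ha using hroot
  have hlt : ∀ {k l}, k ≤ l → a k < a l + 1 := fun hkl =>
    (Nat.pow_lt_pow_iff_left hp).1 ((ha _).1.trans_lt (hkl.trans_lt (ha _).2))
  have hmono : Monotone a := fun k l hkl => Nat.lt_succ_iff.1 (hlt hkl)
  have hstep : ∀ k, a (k + 1) ≤ a k + 1 := fun k => by
    have : a (k + 1) ^ p < (a k + 2) ^ p :=
      ((ha _).1.trans (Nat.succ_le_of_lt (ha k).2)).trans_lt (Nat.pow_lt_pow_left (by omega) hp)
    have := (Nat.pow_lt_pow_iff_left hp).1 this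
    omega
  have ha0 : a 0 = 0 := (pow_eq_zero_iff hp).1 (Nat.le_zero.1 (ha 0).1)
  exact ⟨{j | a j < a (j + 1)}, fun k => cnt_setOf_lt_succ ha0 hmono hstep k ▸ ha k⟩

lemma cnt_iUnion_Ico_le {b : ℕ → ℕ} (hb : Monotone b) (e : ℕ → ℕ) {N j : ℕ} (hj : j ≤ b N) :
    cnt (⋃ i, Set.Ico (b i) (e i)) j ≤ ∑ i ∈ range N, (e i - b i) := by
  classical
  have hsub : (⋃ i, Set.Ico (b i) (e i)) ∩ Set.Iio j ⊆
      ↑((range N).biUnion fun i => Ico (b i) (e i)) := by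
    rintro x ⟨hx, hxj⟩
    obtain ⟨i, hi⟩ := Set.mem_iUnion.1 hx
    have hiN : i < N := by
      by_contra! hNi
      have := hb hNi
      simp only [Set.mem_Ico, Set.mem_Iio] at hi hxj
      omega
    simp only [coe_biUnion, mem_coe, mem_range, coe_Ico, Set.mem_iUnion₂]
    exact ⟨i, hiN, hi⟩
  calc cnt _ j ≤ _ := Set.ncard_le_ncard hsub (Finset.finite_toSet _)
    _ = _ := Set.ncard_coe_finset _
    _ ≤ ∑ i ∈ range N, (Ico (b i) (e i)).card := card_biUnion_le
    _ = _ := by simp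

lemma sub_le_cnt_iUnion_Ico (b e : ℕ → ℕ) (n : ℕ) :
    e n - b n ≤ cnt (⋃ i, Set.Ico (b i) (e i)) (e n) := by
  rw [← Set.ncard_Ico_nat]
  exact Set.ncard_le_ncard (fun x hx => ⟨Set.mem_iUnion.2 ⟨n, hx⟩, hx.2⟩)
    ((Set.finite_Iio _).inter_of_right _)

lemma isLittleO_log_of_pow_le {u : ℕ → ℕ}
    (hu : ∀ N : ℕ, ∃ A : ℕ, ∀ᶠ k in atTop, u k ^ (N + 1) ≤ A * k) :
    (fun k => Real.log (u k)) =o[atTop] (fun k : ℕ => Real.log k) := by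
  refine IsLittleO.of_bound fun c hc => ?_
  obtain ⟨N, hN⟩ := exists_nat_gt (2 / c)
  obtain ⟨A, hA⟩ := hu N
  filter_upwards [hA, eventually_ge_atTop (max A 1)] with k hk hkA
  rw [Real.norm_of_nonneg (Real.log_natCast_nonneg _),
    Real.norm_of_nonneg (Real.log_natCast_nonneg _)]
  have hlogk : 0 ≤ Real.log k := Real.log_natCast_nonneg k
  have hcN : 2 ≤ c * (N + 1) := by
    rw [div_lt_iff₀ hc] at hN
    nlinarith
  rcases Nat.eq_zero_or_pos (u k) with h0 | hpos
  · simp only [h0, Nat.cast_zero, Real.log_zero]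
    positivity
  have hpow : u k ^ (N + 1) ≤ k ^ 2 :=
    hk.trans (sq k ▸ Nat.mul_le_mul_right k ((le_max_left _ _).trans hkA))
  have hlog : (N + 1 : ℝ) * Real.log (u k) ≤ 2 * Real.log k := by
    have := Real.log_le_log (by positivity) (show ((u k : ℝ)) ^ (N + 1) ≤ (k : ℝ) ^ 2 by
      exact_mod_cast hpow)
    rwa [Real.log_pow, Real.log_pow, Nat.cast_add_one, Nat.cast_ofNat] at this
  nlinarith

lemma not_isLittleO_log_of_le_pow {u : ℕ → ℕ} {p : ℕ} (hu : ∀ᶠ k in atTop, k ≤ u k ^ p) :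
    ¬ (fun k => Real.log (u k)) =o[atTop] (fun k : ℕ => Real.log k) := by
  intro ho
  have hO : (fun k : ℕ => Real.log k) =O[atTop] (fun k => Real.log (u k)) := by
    refine IsBigO.of_bound p ?_
    filter_upwards [hu, eventually_ge_atTop 1] with k hk hk1
    rw [Real.norm_of_nonneg (Real.log_natCast_nonneg _)]
    calc Real.log k ≤ Real.log ((u k : ℝ) ^ p) :=
          Real.log_le_log (by exact_mod_cast hk1) (by exact_mod_cast hk)
      _ = p * Real.log (u k) := Real.log_pow _ _
      _ ≤ p * ‖Real.log (u k)‖ := by gcongr; exact Real.le_norm_self _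
  refine isLittleO_irrefl' ?_ (hO.trans_isLittleO ho)
  refine (eventually_ge_atTop 2).frequently.mono fun k hk => ?_
  exact norm_ne_zero_iff.2 (Real.log_pos (by exact_mod_cast hk)).ne'

lemma fLog_natCast (n : ℕ) : fLog n = Real.log ((n + 1 : ℕ) : ℝ) := by
  rw [fLog, Nat.cast_add_one, add_comm]

lemma gEx_pos (k : ℕ) : 0 < gEx k := by
  unfold gEx
  split_ifs <;> positivity

lemma gEx_add_one_le {k : ℕ} (hk : 5 ≤ k) : gEx k + 1 ≤ k := by
  rw [gEx, if_neg (by omega)]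
  have := Nat.pow_log_le_self 4 (show k - 1 ≠ 0 by omega)
  have := Nat.pow_le_pow_left (show 2 ≤ 4 by norm_num) (Nat.log 4 (k - 1))
  omega

lemma le_gEx_pow_four {k : ℕ} (hk : 5 ≤ k) : k ≤ gEx k ^ 4 := by
  rw [gEx, if_neg (by omega)]
  set m := Nat.log 4 (k - 1)
  have hm : 1 ≤ m := Nat.log_pos (by norm_num) (by omega)
  have hk4 : k - 1 < 4 ^ (m + 1) := Nat.lt_pow_succ_log_self (by norm_num) _
  have h4 : 4 ^ (m + 1) ≤ (2 ^ m) ^ 4 := by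
    rw [← pow_mul, show (4 : ℕ) = 2 ^ 2 by norm_num, ← pow_mul]
    exact Nat.pow_le_pow_right (by norm_num) (by omega)
  omega

lemma isTheta_fLog_gEx_log : (fun k => fLog (gEx k)) =Θ[atTop] (fun k : ℕ => Real.log k) := by
  simp only [fLog_natCast]
  refine ⟨IsBigO.of_bound 1 ?_, IsBigO.of_bound 4 ?_⟩ <;>
    filter_upwards [eventually_ge_atTop 5] with k hk <;>
    rw [Real.norm_of_nonneg (Real.log_natCast_nonneg _),
      Real.norm_of_nonneg (Real.log_natCast_nonneg _)]
  · rw [one_mul]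
    exact Real.log_le_log (by positivity) (by exact_mod_cast gEx_add_one_le hk)
  · calc Real.log k ≤ Real.log (((gEx k : ℕ) : ℝ) ^ 4) :=
          Real.log_le_log (by positivity) (by exact_mod_cast le_gEx_pow_four hk)
      _ ≤ 4 * Real.log ((gEx k + 1 : ℕ) : ℝ) := by
          rw [Real.log_pow, Nat.cast_ofNat]
          gcongr
          · exact_mod_cast gEx_pos k
          · exact_mod_cast (gEx k).le_succ

lemma mem_ZgfN_fLog_gEx_iff (C : Set ℕ) :
    C ∈ ZgfN fLog gEx ↔
      (fun k => Real.log ((cnt C k + 1 : ℕ) : ℝ)) =o[atTop] (fun k : ℕ => Real.log k) := by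
  have hpos : ∀ k, fLog (gEx k) ≠ 0 := fun k => by
    rw [fLog_natCast]
    exact (Real.log_pos (by exact_mod_cast Nat.succ_lt_succ (gEx_pos k))).ne'
  rw [ZgfN, Set.mem_ofPred_eq, ← isLittleO_iff_tendsto fun k hk => absurd hk (hpos k),
    isTheta_fLog_gEx_log.isLittleO_congr_right]
  simp only [fLog_natCast]

lemma exists_mem_Zh_notMem_ZgfN {h : ℕ → ℕ} {n : ℕ} (hn : ∀ᶠ k in atTop, k ≤ h k ^ (n + 1)) :
    ∃ C ∈ Zh h, C ∉ ZgfN fLog gEx := by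
  obtain ⟨C, hC⟩ := exists_cnt_pow_le_lt (2 * (n + 1)) (by omega)
  refine ⟨C, ?_, ?_⟩
  · have hsq : ∀ᶠ k in atTop, cnt C k ^ 2 ≤ h k := hn.mono fun k hk =>
      (Nat.pow_le_pow_iff_left n.succ_ne_zero).1 (by rw [← pow_mul]; exact (hC k).1.trans hk)
    have htop : Tendsto (cnt C) atTop atTop := tendsto_atTop_atTop.2 fun M =>
      ⟨(M + 1) ^ (2 * (n + 1)), fun k hk => by
        have := (Nat.pow_lt_pow_iff_left (by omega)).1 (hk.trans_lt (hC k).2)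
        omega⟩
    refine squeeze_zero' (Eventually.of_forall fun k => by positivity) ?_
      (tendsto_inv_atTop_zero.comp (tendsto_natCast_atTop_atTop.comp htop))
    filter_upwards [hsq, htop.eventually_ge_atTop 1] with k hk hk1
    have hc : (0 : ℝ) < cnt C k := by exact_mod_cast hk1
    calc (cnt C k : ℝ) / h k ≤ cnt C k / (cnt C k : ℝ) ^ 2 :=
          div_le_div_of_nonneg_left hc.le (by positivity) (by exact_mod_cast hk)
      _ = (cnt C k : ℝ)⁻¹ := by rw [sq, div_mul_cancel_left₀ hc.ne']
  · rw [mem_ZgfN_fLog_gEx_iff]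
    exact not_isLittleO_log_of_le_pow (Eventually.of_forall fun k => (hC k).2.le)

lemma exists_lt_le_succ_of_strictMono {κ : ℕ → ℕ} (hκ : StrictMono κ) {N j : ℕ} (hj : κ N < j) :
    ∃ n, N ≤ n ∧ κ n < j ∧ j ≤ κ (n + 1) := by
  have hex : ∃ m, j ≤ κ m := ⟨j, hκ.le_apply⟩
  obtain ⟨n, hn⟩ : ∃ n, Nat.find hex = n + 1 := Nat.exists_eq_succ_of_ne_zero fun h0 => by
    have := Nat.find_spec hex
    rw [h0] at this
    exact (hκ.monotone (Nat.zero_le N)).not_gt (this.trans_lt' hj)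
  have hjn : j ≤ κ (n + 1) := hn ▸ Nat.find_spec hex
  refine ⟨n, ?_, not_le.1 (Nat.find_min hex (by omega)), hjn⟩
  by_contra! hnN
  exact (hκ.monotone hnN).not_gt (hj.trans_le hjn)

def blockSet (h κ : ℕ → ℕ) : Set ℕ := ⋃ n, Set.Ico (κ n - h (κ n)) (κ n)

structure IsBlockSequence (h κ : ℕ → ℕ) : Prop where
  pos_zero : 0 < h (κ 0)
  pow_lt : ∀ n, h (κ n) ^ (n + 2) < κ n
  two_mul_le : ∀ n, 2 * κ n ≤ κ (n + 1)
  lt_succ : ∀ n, κ n < h (κ (n + 1))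

lemma exists_isBlockSequence {h : ℕ → ℕ} (hh : Tendsto h atTop atTop)
    (hfreq : ∀ m, ∃ᶠ k in atTop, h k ^ (m + 1) < k) : ∃ κ, IsBlockSequence h κ := by
  have hnext : ∀ n K, ∃ k, h k ^ (n + 2) < k ∧ 2 * K ≤ k ∧ K < h k := fun n K =>
    ((hfreq (n + 1)).and_eventually
      ((eventually_ge_atTop (2 * K)).and (hh.eventually_gt_atTop K))).exists
  choose next hnext using hnext
  let κ' : ℕ → ℕ := fun n => Nat.rec (motive := fun _ => ℕ) 0 (fun n k => next n k) n
  exact ⟨fun n => κ' (n + 1), (hnext 0 0).2.2, fun n => (hnext n _).1,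
    fun n => (hnext (n + 1) _).2.1, fun n => (hnext (n + 1) _).2.2⟩

namespace IsBlockSequence

variable {h κ : ℕ → ℕ}

lemma one_le (hκ : IsBlockSequence h κ) (n : ℕ) : 1 ≤ h (κ n) := by
  cases n with
  | zero => exact hκ.pos_zero
  | succ n => exact (Nat.zero_le _).trans_lt (hκ.lt_succ n)

lemma two_mul_le_self (hκ : IsBlockSequence h κ) (n : ℕ) : 2 * h (κ n) ≤ κ n := by
  have h1 := hκ.one_le n
  have hsq : h (κ n) ^ 2 ≤ h (κ n) ^ (n + 2) := Nat.pow_le_pow_right h1 (by omega)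
  have := hκ.pow_lt n
  nlinarith

lemma le_sub_succ (hκ : IsBlockSequence h κ) (n : ℕ) : κ n ≤ κ (n + 1) - h (κ (n + 1)) := by
  have := hκ.two_mul_le n
  have := hκ.two_mul_le_self (n + 1)
  omega

lemma monotone_sub (hκ : IsBlockSequence h κ) : Monotone fun n => κ n - h (κ n) :=
  monotone_nat_of_le_succ fun n => (Nat.sub_le _ _).trans (hκ.le_sub_succ n)

lemma strictMono (hκ : IsBlockSequence h κ) : StrictMono κ :=
  strictMono_nat_of_lt_succ fun n => by
    have := hκ.le_sub_succ n
    have := hκ.one_le (n + 1)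
    have := hκ.two_mul_le_self (n + 1)
    omega

lemma sum_le (hκ : IsBlockSequence h κ) (n : ℕ) : ∑ i ∈ range (n + 1), h (κ i) ≤ κ n := by
  induction n with
  | zero =>
    have := hκ.two_mul_le_self 0
    simp only [zero_add, sum_range_one]
    omega
  | succ n ih =>
    rw [sum_range_succ]
    have := hκ.two_mul_le n
    have := hκ.two_mul_le_self (n + 1)
    omega

lemma sum_le_two_mul (hκ : IsBlockSequence h κ) (n : ℕ) :
    ∑ i ∈ range (n + 1), h (κ i) ≤ 2 * h (κ n) := by
  cases n with
  | zero =>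
    simp only [zero_add, sum_range_one]
    omega
  | succ n =>
    rw [sum_range_succ]
    have := hκ.sum_le n
    have := hκ.lt_succ n
    omega

lemma cnt_blockSet_le (hκ : IsBlockSequence h κ) {n j : ℕ}
    (hj : j ≤ κ (n + 1) - h (κ (n + 1))) : cnt (blockSet h κ) j ≤ 2 * h (κ n) :=
  calc cnt (blockSet h κ) j ≤ ∑ i ∈ range (n + 1), (κ i - (κ i - h (κ i))) :=
        cnt_iUnion_Ico_le hκ.monotone_sub κ hj
    _ = ∑ i ∈ range (n + 1), h (κ i) := sum_congr rfl fun i _ => by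
        have := hκ.two_mul_le_self i
        omega
    _ ≤ 2 * h (κ n) := hκ.sum_le_two_mul n

lemma le_cnt_blockSet (hκ : IsBlockSequence h κ) (n : ℕ) :
    h (κ n) ≤ cnt (blockSet h κ) (κ n) :=
  calc h (κ n) = κ n - (κ n - h (κ n)) := by have := hκ.two_mul_le_self n; omega
    _ ≤ cnt (blockSet h κ) (κ n) := sub_le_cnt_iUnion_Ico (fun i => κ i - h (κ i)) κ n

lemma exists_cnt_blockSet_le (hκ : IsBlockSequence h κ) {N j : ℕ} (hj : κ N < j) :
    ∃ i, N ≤ i ∧ cnt (blockSet h κ) j ≤ 2 * h (κ i) ∧ h (κ i) ^ (i + 2) < 2 * j := by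
  obtain ⟨n, hNn, hnj, hjn⟩ := exists_lt_le_succ_of_strictMono hκ.strictMono hj
  by_cases hb : j ≤ κ (n + 1) - h (κ (n + 1))
  · exact ⟨n, hNn, hκ.cnt_blockSet_le hb, by have := hκ.pow_lt n; omega⟩
  · refine ⟨n + 1, by omega, hκ.cnt_blockSet_le (hjn.trans (hκ.le_sub_succ (n + 1))), ?_⟩
    have := hκ.pow_lt (n + 1)
    have := hκ.two_mul_le_self (n + 1)
    omega

lemma cnt_blockSet_add_one_pow_le (hκ : IsBlockSequence h κ) (N : ℕ) :
    ∀ᶠ j in atTop, (cnt (blockSet h κ) j + 1) ^ (N + 1) ≤ 2 * 3 ^ (N + 1) * j := by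
  filter_upwards [eventually_gt_atTop (κ N)] with j hj
  obtain ⟨i, hNi, hcnt, hpow⟩ := hκ.exists_cnt_blockSet_le hj
  have h1 := hκ.one_le i
  calc (cnt (blockSet h κ) j + 1) ^ (N + 1) ≤ (3 * h (κ i)) ^ (N + 1) :=
        Nat.pow_le_pow_left (by omega) _
    _ = 3 ^ (N + 1) * h (κ i) ^ (N + 1) := mul_pow _ _ _
    _ ≤ 3 ^ (N + 1) * h (κ i) ^ (i + 2) :=
        Nat.mul_le_mul_left _ (Nat.pow_le_pow_right h1 (by omega))
    _ ≤ 2 * 3 ^ (N + 1) * j := by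
        rw [mul_comm 2, mul_assoc]
        exact Nat.mul_le_mul_left _ hpow.le

lemma blockSet_mem_ZgfN (hκ : IsBlockSequence h κ) : blockSet h κ ∈ ZgfN fLog gEx :=
  (mem_ZgfN_fLog_gEx_iff _).2
    (isLittleO_log_of_pow_le fun N => ⟨_, hκ.cnt_blockSet_add_one_pow_le N⟩)

lemma blockSet_notMem_Zh (hκ : IsBlockSequence h κ) : blockSet h κ ∉ Zh h := by
  intro hZ
  obtain ⟨n, hn⟩ := ((Tendsto.comp hZ hκ.strictMono.tendsto_atTop).eventually_lt_const
    one_pos).exists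
  have hpos : (0 : ℝ) < h (κ n) := by exact_mod_cast hκ.one_le n
  have hle : (h (κ n) : ℝ) ≤ cnt (blockSet h κ) (κ n) := by exact_mod_cast hκ.le_cnt_blockSet n
  rw [Function.comp_apply, div_lt_one hpos] at hn
  linarith

end IsBlockSequence

theorem stmt17 : ∀ h : ℕ → ℕ, InH h → ZgfN fLog gEx ≠ Zh h := by
  rintro h ⟨hh, -⟩ hEq
  by_cases hpow : ∃ n, ∀ᶠ k in atTop, k ≤ h k ^ (n + 1)
  · obtain ⟨n, hn⟩ := hpow
    obtain ⟨C, hCh, hCg⟩ := exists_mem_Zh_notMem_ZgfN hn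
    exact hCg (hEq ▸ hCh)
  · simp only [not_exists, not_eventually, not_le] at hpow
    obtain ⟨κ, hκ⟩ := exists_isBlockSequence hh hpow
    exact hκ.blockSet_notMem_Zh (hEq ▸ hκ.blockSet_mem_ZgfN)
end

section
/- Let f be an unbounded modulus function. Then Z(f) ⊆ Z, i.e., every set C ⊆ ℕ with limsup_{k→∞} f(|C ∩ [0,k-1]|)/f(k) = 0 satisfies lim_{k→∞} |C ∩ [0,k-1]|/k = 0. -/
open Filter Topology

theorem stmt18 (f : ℝ → ℝ) (hf : IsModulus f) (hfu : IsUnboundedMod f) (C : Set ℕ) :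
    Tendsto (fun k => f (cnt C k) / f (k : ℝ)) atTop (nhds 0) →
    Tendsto (fun k => (cnt C k : ℝ) / (k : ℝ)) atTop (nhds 0) := by
  obtain ⟨hnn, hmono, hsub, hzero, _⟩ := hf
  -- iterated subadditivity
  have hiter : ∀ (n : ℕ) (x : ℝ), 0 ≤ x → f (n * x) ≤ n * f x := by
    intro n
    induction n with
    | zero => intro x hx; simp [(hzero 0 le_rfl).mpr rfl]
    | succ m ih =>
      intro x hx
      have : ((m : ℝ) + 1) * x = m * x + x := by ring
      push_cast
      rw [this]
      calc f (m * x + x) ≤ f (m * x) + f x := hsub _ _ (by positivity) hx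
        _ ≤ m * f x + f x := by linarith [ih x hx]
        _ = ((m : ℝ) + 1) * f x := by ring
  have hf1 : 0 < f 1 := by
    rcases lt_or_eq_of_le (hnn 1 zero_le_one) with h | h
    · exact h
    · exact absurd ((hzero 1 zero_le_one).mp h.symm) one_ne_zero
  have hfk : ∀ k : ℕ, 1 ≤ k → 0 < f k := by
    intro k hk
    exact lt_of_lt_of_le hf1 (hmono (by simp) (by simp) (by exact_mod_cast hk))
  intro h
  rw [Metric.tendsto_atTop] at h ⊢
  intro ε hε
  set n : ℕ := ⌈1 / ε⌉₊ with hn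
  have hnpos : 0 < n := Nat.ceil_pos.mpr (by positivity)
  have hnR : (0 : ℝ) < n := by exact_mod_cast hnpos
  obtain ⟨N, hN⟩ := h (1 / n) (by positivity)
  refine ⟨max N 1, fun k hk => ?_⟩
  have hk1 : 1 ≤ k := le_trans (le_max_right N 1) hk
  have hkN : N ≤ k := le_trans (le_max_left N 1) hk
  have hkR : (0 : ℝ) < k := by exact_mod_cast hk1
  have hfkpos := hfk k hk1
  have hcnt : (0 : ℝ) ≤ (cnt C k : ℝ) := Nat.cast_nonneg _
  rw [Real.dist_eq, sub_zero, abs_of_nonneg (by positivity)]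
  by_contra hcon
  push_neg at hcon
  have hεk : ε * k ≤ (cnt C k : ℝ) := by
    rw [le_div_iff₀ hkR] at hcon
    exact hcon
  -- f k ≤ n * f (cnt C k)
  have h1 : (k : ℝ) ≤ n * (ε * k) := by
    have : (1 : ℝ) / ε ≤ n := Nat.le_ceil _
    calc (k : ℝ) = (1 / ε * ε) * k := by field_simp
      _ ≤ (n * ε) * k := by
          apply mul_le_mul_of_nonneg_right _ hkR.le
          exact mul_le_mul_of_nonneg_right this hε.le
      _ = n * (ε * k) := by ring
  have h2 : f k ≤ n * f (cnt C k) := by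
    calc f k ≤ f (n * (ε * k)) := hmono (Set.mem_Ici.mpr (by positivity)) (Set.mem_Ici.mpr (by positivity)) h1
      _ ≤ n * f (ε * k) := hiter n _ (by positivity)
      _ ≤ n * f (cnt C k) := by
          apply mul_le_mul_of_nonneg_left _ hnR.le
          exact hmono (Set.mem_Ici.mpr (by positivity)) (Set.mem_Ici.mpr hcnt) hεk
  have hdist := hN k hkN
  rw [Real.dist_eq, sub_zero, abs_of_nonneg
    (div_nonneg (hnn _ hcnt) (hnn _ hkR.le))] at hdist
  rw [div_lt_div_iff₀ hfkpos hnR] at hdist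
  linarith
end

section
/- Let f be an unbounded modulus function and let I be an ideal on ℕ which is an Erdős–Ulam ideal and is increasing-invariant. Then Z(f) ⊆ I. -/
/-!
For a modulus `f`, subadditivity gives `m * f k ≤ 2 * k * f m` for `1 ≤ m ≤ k`, so every
`B ∈ Z(f)` has asymptotic density zero. For such `B` choose blocks `[W j, W (j+1))` whose lengths
tend to infinity slowly enough that `B` has at most `W 0 + j` elements below `W (j+1)`, and let
`C` consist of `[0, W 0)` together with one point of each block where `h` is minimal. Then `C` has
at least as many elements as `B` below every `k`, while the `h`-mass of `C` in a block is at most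
the block's average, so `C` lies in the Erdős–Ulam ideal of `h`; increasing invariance gives
`B ∈ I`.
-/

open Filter Topology

/-- `I` is an ideal on `ℕ`. -/
def IsIdeal (I : Set (Set ℕ)) : Prop :=
  I.Nonempty ∧ (∀ A B : Set ℕ, A ∈ I → B ∈ I → A ∪ B ∈ I) ∧
  (∀ A B : Set ℕ, A ∈ I → B ⊆ A → B ∈ I) ∧ Set.univ ∉ I

/-- `I` is an Erdős–Ulam ideal. -/
def IsEU (I : Set (Set ℕ)) : Prop :=
  ∃ h : ℕ → ℝ, (∀ i, 0 ≤ h i) ∧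
    Tendsto (fun k => ∑ i ∈ Finset.range k, h i) atTop atTop ∧
    Tendsto (fun k => h k / ∑ i ∈ Finset.range (k + 1), h i) atTop (nhds 0) ∧
    I = {C : Set ℕ |
      Tendsto (fun k => (∑ i ∈ Finset.range k, C.indicator h i) / ∑ i ∈ Finset.range k, h i)
        atTop (nhds 0)}

/-- `I` is increasing-invariant. -/
def IncreasingInvariant (I : Set (Set ℕ)) : Prop :=
  ∀ C ∈ I, ∀ B : Set ℕ, (∀ k : ℕ, cnt B k ≤ cnt C k) → B ∈ I

open Finset

lemma cnt_le (C : Set ℕ) (k : ℕ) : cnt C k ≤ k :=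
  (Set.ncard_le_ncard Set.inter_subset_right (Set.finite_Iio k)).trans_eq (Set.ncard_Iio_nat k)

lemma cnt_mono (C : Set ℕ) : Monotone (cnt C) := fun _ l hkl =>
  Set.ncard_le_ncard (Set.inter_subset_inter_right _ (Set.Iio_subset_Iio hkl))
    ((Set.finite_Iio l).inter_of_right C)

lemma cnt_lt_cnt {C : Set ℕ} {a b : ℕ} (ha : a ∈ C) (hab : a < b) : cnt C a < cnt C b := by
  refine Set.ncard_lt_ncard ?_ ((Set.finite_Iio b).inter_of_right C)
  refine (Set.ssubset_iff_of_subset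
    (Set.inter_subset_inter_right _ (Set.Iio_subset_Iio hab.le))).2 ⟨a, ⟨ha, hab⟩, ?_⟩
  simp

lemma cnt_of_Iio_subset {C : Set ℕ} {k : ℕ} (hk : Set.Iio k ⊆ C) : cnt C k = k := by
  rw [cnt, Set.inter_eq_right.2 hk, Set.ncard_Iio_nat]

namespace IsModulus

variable {f : ℝ → ℝ}

lemma map_nat_mul_le (hf : IsModulus f) (n : ℕ) {x : ℝ} (hx : 0 ≤ x) : f (n * x) ≤ n * f x := by
  induction n with
  | zero => simp [(hf.2.2.2.1 0 le_rfl).2 rfl]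
  | succ n ih =>
    calc f ((n + 1 : ℕ) * x) = f (n * x + x) := by push_cast; ring_nf
      _ ≤ f (n * x) + f x := hf.2.2.1 _ _ (by positivity) hx
      _ ≤ (n + 1 : ℕ) * f x := by push_cast; linarith

lemma pos (hf : IsModulus f) {x : ℝ} (hx : 0 < x) : 0 < f x :=
  (hf.1 x hx.le).lt_of_ne fun h => hx.ne' ((hf.2.2.2.1 x hx.le).1 h.symm)

lemma mul_apply_le_two_mul_mul_apply (hf : IsModulus f) {x y : ℝ} (hy : 0 < y) (hyx : y ≤ x) :
    y * f x ≤ 2 * x * f y := by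
  set n := ⌈x / y⌉₊
  have hxn : x ≤ n * y := (div_le_iff₀ hy).1 (Nat.le_ceil _)
  have hnx : n * y ≤ 2 * x := by
    have := (lt_div_iff₀ hy).1
      ((Nat.ceil_lt_add_one (div_nonneg (hy.le.trans hyx) hy.le)).trans_le
        (by rw [div_add_one hy.ne']; gcongr) : (n : ℝ) < (x + x) / y)
    linarith
  have hfx : f x ≤ n * f y :=
    (hf.2.1 (by simp only [Set.mem_Ici]; linarith) (by simp only [Set.mem_Ici]; positivity)
      hxn).trans (hf.map_nat_mul_le n hy.le)
  calc y * f x ≤ y * (n * f y) := by gcongr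
    _ = (n * y) * f y := by ring
    _ ≤ 2 * x * f y := by gcongr; exact hf.1 y hy.le

lemma tendsto_cnt_div (hf : IsModulus f) {B : Set ℕ}
    (hB : Tendsto (fun k => f (cnt B k) / f k) atTop (𝓝 0)) :
    Tendsto (fun k => (cnt B k : ℝ) / k) atTop (𝓝 0) := by
  refine squeeze_zero' (Eventually.of_forall fun k => by positivity) ?_
    (by simpa using hB.const_mul 2)
  filter_upwards [eventually_gt_atTop 0] with k hk
  have hfk : 0 < f k := hf.pos (by exact_mod_cast hk)
  rcases Nat.eq_zero_or_pos (cnt B k) with h0 | hpos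
  · simp only [h0, Nat.cast_zero, zero_div]
    exact mul_nonneg zero_le_two (div_nonneg (hf.1 _ le_rfl) hfk.le)
  · rw [mul_div_assoc', div_le_div_iff₀ (by exact_mod_cast hk) hfk]
    linarith [hf.mul_apply_le_two_mul_mul_apply (x := k) (y := cnt B k) (by exact_mod_cast hpos)
      (by exact_mod_cast cnt_le B k)]

end IsModulus

lemma exists_monotone_tendsto_mul_le {u : ℕ → ℕ}
    (hu : Tendsto (fun k => (u k : ℝ) / k) atTop (𝓝 0)) :
    ∃ g : ℕ → ℕ, Monotone g ∧ Tendsto g atTop atTop ∧ ∀ k, g k * u k ≤ k := by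
  classical
  have hev (s : ℕ) : ∀ᶠ k in atTop, s * u k ≤ k := by
    filter_upwards [hu.eventually (gt_mem_nhds (inv_pos.2 s.cast_add_one_pos)),
      eventually_gt_atTop 0] with k hk hk0
    rw [div_lt_iff₀ (by exact_mod_cast hk0), ← div_eq_inv_mul,
      lt_div_iff₀ s.cast_add_one_pos] at hk
    have : ((s + 1) * u k : ℕ) < (k : ℝ) := by push_cast; linarith
    exact le_trans (Nat.mul_le_mul_right _ (Nat.le_succ s)) (by exact_mod_cast this.le)
  let P (s k : ℕ) : Prop := ∀ k' ≥ k, s * u k' ≤ k'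
  have hP0 (k : ℕ) : P 0 k := fun k' _ => by simp
  have hPmono {s a b : ℕ} (hab : a ≤ b) (h : P s a) : P s b := fun k' hk' => h k' (hab.trans hk')
  refine ⟨fun k => Nat.findGreatest (P · k) k, fun a b hab => ?_, tendsto_atTop.2 fun s => ?_,
    fun k => Nat.findGreatest_spec (P := (P · k)) (Nat.zero_le k) (hP0 k) k le_rfl⟩
  · exact Nat.le_findGreatest ((Nat.findGreatest_le a).trans hab)
      (hPmono hab (Nat.findGreatest_spec (P := (P · a)) (Nat.zero_le a) (hP0 a)))
  · obtain ⟨K, hK⟩ := eventually_atTop.1 (hev s)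
    filter_upwards [eventually_ge_atTop (max K s)] with k hk
    exact Nat.le_findGreatest (le_of_max_le_right hk)
      fun k' hk' => hK k' ((le_max_left _ _).trans (hk.trans hk'))

def blockSeq (g : ℕ → ℕ) (N : ℕ) : ℕ → ℕ
  | 0 => N
  | j + 1 => blockSeq g N j + g (blockSeq g N j)

section blockSeq

variable {g : ℕ → ℕ} {N : ℕ}

lemma blockSeq_succ (j : ℕ) : blockSeq g N (j + 1) = blockSeq g N j + g (blockSeq g N j) := rfl

lemma blockSeq_monotone : Monotone (blockSeq g N) :=
  monotone_nat_of_le_succ fun _ => Nat.le_add_right _ _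

lemma blockSeq_strictMono (hg : Monotone g) (hN : 1 ≤ g N) : StrictMono (blockSeq g N) :=
  strictMono_nat_of_lt_succ fun j =>
    Nat.lt_add_of_pos_right (hN.trans (hg (blockSeq_monotone (Nat.zero_le j))))

lemma tendsto_blockSeq_gap (hg : Monotone g) (hgt : Tendsto g atTop atTop) (hN : 1 ≤ g N) :
    Tendsto (fun j => blockSeq g N (j + 1) - blockSeq g N j) atTop atTop := by
  simp only [blockSeq_succ, Nat.add_sub_cancel_left]
  exact hgt.comp (blockSeq_strictMono hg hN).tendsto_atTop

lemma blockSeq_succ_le (hg : Monotone g) (t : ℕ) :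
    blockSeq g N (t + 1) ≤ N + (t + 1) * g (blockSeq g N t) := by
  induction t with
  | zero => simp [blockSeq]
  | succ t ih =>
    have := hg (blockSeq_monotone (g := g) (N := N) (Nat.le_succ t))
    rw [blockSeq_succ]
    nlinarith

lemma cnt_blockSeq_succ_le {B : Set ℕ} (hg : Monotone g) (hN : 1 ≤ g N)
    (hgB : ∀ k, g k * (2 * cnt B k) ≤ k) (t : ℕ) : cnt B (blockSeq g N (t + 1)) ≤ N + t := by
  set G := g (blockSeq g N (t + 1))
  have hG : 1 ≤ G := hN.trans (hg (blockSeq_monotone (Nat.zero_le _)))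
  have hgap : g (blockSeq g N t) ≤ G := hg (blockSeq_monotone (Nat.le_succ t))
  have : G * (2 * cnt B (blockSeq g N (t + 1))) ≤ G * (N + t + 1) := calc
    _ ≤ blockSeq g N (t + 1) := hgB _
    _ ≤ N + (t + 1) * g (blockSeq g N t) := blockSeq_succ_le hg t
    _ ≤ G * (N + t + 1) := by nlinarith
  have := Nat.le_of_mul_le_mul_left this hG
  omega

end blockSeq

lemma exists_mem_block {W : ℕ → ℕ} (hW : StrictMono W) {k : ℕ} (hk : W 0 ≤ k) :
    ∃ t, W t ≤ k ∧ k < W (t + 1) := by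
  obtain ⟨t, h1, h2⟩ := hW.exists_between_of_tendsto_atTop hW.tendsto_atTop (Nat.lt_succ_of_le hk)
  exact ⟨t, Nat.le_of_lt_succ h1, h2⟩

section blocks

variable {W c : ℕ → ℕ}

lemma eq_of_mem_block (hW : StrictMono W) {i j j' : ℕ} (hj : i ∈ Ico (W j) (W (j + 1)))
    (hj' : i ∈ Ico (W j') (W (j' + 1))) : j = j' := by
  rw [mem_Ico] at hj hj'
  have := hW.lt_iff_lt.1 (hj.1.trans_lt hj'.2)
  have := hW.lt_iff_lt.1 (hj'.1.trans_lt hj.2)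
  omega

lemma cnt_le_cnt_Iio_union_range {B : Set ℕ} (hW : StrictMono W)
    (hc : ∀ j, c j ∈ Ico (W j) (W (j + 1))) (hB : ∀ t, cnt B (W (t + 1)) ≤ W 0 + t) (k : ℕ) :
    cnt B k ≤ cnt (Set.Iio (W 0) ∪ Set.range c) k := by
  set C := Set.Iio (W 0) ∪ Set.range c
  have hCW (t : ℕ) : W 0 + t ≤ cnt C (W t) := by
    induction t with
    | zero => exact (cnt_of_Iio_subset Set.subset_union_left).ge
    | succ t ih =>
      have hct := mem_Ico.1 (hc t)
      have := cnt_lt_cnt (C := C) (Or.inr ⟨t, rfl⟩) hct.2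
      have := cnt_mono C hct.1
      omega
  rcases le_or_gt k (W 0) with hk | hk
  · rw [cnt_of_Iio_subset ((Set.Iio_subset_Iio hk).trans Set.subset_union_left)]
    exact cnt_le B k
  · obtain ⟨t, hWt, hkt⟩ := exists_mem_block hW hk.le
    calc cnt B k ≤ cnt B (W (t + 1)) := cnt_mono B hkt.le
      _ ≤ W 0 + t := hB t
      _ ≤ cnt C (W t) := hCW t
      _ ≤ cnt C k := cnt_mono C hWt

end blocks

def erdosUlamIdeal (h : ℕ → ℝ) : Set (Set ℕ) :=
  {C | Tendsto (fun k => (∑ i ∈ range k, C.indicator h i) / ∑ i ∈ range k, h i) atTop (𝓝 0)}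

section erdosUlamIdeal

variable {h : ℕ → ℝ}

lemma monotone_sum_range (hpos : ∀ i, 0 ≤ h i) : Monotone fun k => ∑ i ∈ range k, h i :=
  fun _ _ hab => sum_le_sum_of_subset_of_nonneg (range_subset_range.2 hab) fun i _ _ => hpos i

lemma mem_erdosUlamIdeal_of_forall_le {C : Set ℕ} (hpos : ∀ i, 0 ≤ h i)
    (hH : Tendsto (fun k => ∑ i ∈ range k, h i) atTop atTop)
    (hC : ∀ ε > 0, ∃ M K, ∀ k ≥ K,
      ∑ i ∈ range k, C.indicator h i ≤ M + ε * ∑ i ∈ range k, h i) :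
    C ∈ erdosUlamIdeal h := by
  refine tendsto_order.2 ⟨fun a ha => Eventually.of_forall fun k => ha.trans_le ?_, fun ε hε => ?_⟩
  · exact div_nonneg (sum_nonneg fun i _ => Set.indicator_nonneg (fun i _ => hpos i) i)
      (sum_nonneg fun i _ => hpos i)
  obtain ⟨M, K, hMK⟩ := hC (ε / 2) (half_pos hε)
  filter_upwards [eventually_ge_atTop K, hH.eventually_gt_atTop (2 * M / ε),
    hH.eventually_gt_atTop 0] with k hk hkM hk0
  rw [div_lt_iff₀ hk0]
  rw [div_lt_iff₀ hε] at hkM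
  linarith [hMK k hk]

lemma eventually_le_mul_sum_range_succ (hH : Tendsto (fun k => ∑ i ∈ range k, h i) atTop atTop)
    (hδ : Tendsto (fun k => h k / ∑ i ∈ range (k + 1), h i) atTop (𝓝 0)) {ε : ℝ} (hε : 0 < ε) :
    ∀ᶠ k in atTop, h k ≤ ε * ∑ i ∈ range (k + 1), h i := by
  filter_upwards [hδ.eventually (gt_mem_nhds hε),
    (hH.comp (tendsto_add_atTop_nat 1)).eventually_gt_atTop 0] with k hk hk0
  exact ((div_lt_iff₀ (show 0 < ∑ i ∈ range (k + 1), h i from hk0)).1 hk).le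

variable {W c : ℕ → ℕ}

lemma sum_indicator_le_of_subset_block (hpos : ∀ i, 0 ≤ h i) (hW : StrictMono W)
    (hc : ∀ j, c j ∈ Ico (W j) (W (j + 1))) {s : Finset ℕ} {j : ℕ}
    (hs : s ⊆ Ico (W j) (W (j + 1))) :
    ∑ i ∈ s, (Set.Iio (W 0) ∪ Set.range c).indicator h i ≤ h (c j) := by
  classical
  rw [sum_indicator_eq_sum_filter, ← sum_singleton h (c j)]
  refine sum_le_sum_of_subset_of_nonneg (fun i hi => ?_) fun i _ _ => hpos i
  obtain ⟨his, hiW | ⟨j', rfl⟩⟩ := mem_filter.1 hi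
  · exact absurd ((hW.monotone (Nat.zero_le j)).trans (mem_Ico.1 (hs his)).1) (not_le.2 hiW)
  · rw [eq_of_mem_block hW (hc j') (hs his)]
    exact mem_singleton_self _

lemma mul_sum_indicator_le (hpos : ∀ i, 0 ≤ h i) (hW : StrictMono W)
    (hc : ∀ j, c j ∈ Ico (W j) (W (j + 1)))
    (hmin : ∀ j, ∀ i ∈ Ico (W j) (W (j + 1)), h (c j) ≤ h i) {L a : ℕ}
    (hL : ∀ j ≥ a, L ≤ W (j + 1) - W j) {b : ℕ} (hab : a ≤ b) :
    L * ∑ i ∈ Ico (W a) (W b), (Set.Iio (W 0) ∪ Set.range c).indicator h i ≤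
      ∑ i ∈ Ico (W a) (W b), h i := by
  induction b, hab using Nat.le_induction with
  | base => simp
  | succ b hab ih =>
    have hb := hW.monotone (Nat.le_succ b)
    rw [← sum_Ico_consecutive _ (hW.monotone hab) hb,
      ← sum_Ico_consecutive _ (hW.monotone hab) hb, mul_add]
    refine add_le_add ih ?_
    calc (L : ℝ) * ∑ i ∈ Ico (W b) (W (b + 1)), (Set.Iio (W 0) ∪ Set.range c).indicator h i
        ≤ (W (b + 1) - W b : ℕ) * h (c b) :=
          mul_le_mul (by exact_mod_cast hL b hab)
            (sum_indicator_le_of_subset_block hpos hW hc subset_rfl)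
            (sum_nonneg fun i _ => Set.indicator_nonneg (fun i _ => hpos i) i) (Nat.cast_nonneg _)
      _ ≤ ∑ i ∈ Ico (W b) (W (b + 1)), h i := by
          simpa [Nat.card_Ico] using card_nsmul_le_sum _ h _ (hmin b)

/-- Complete blocks contribute at most their average, and the one incomplete block
`[W t, k)` at most `h (W t) = o(∑ i ≤ W t, h i)`. -/
theorem Iio_union_range_mem_erdosUlamIdeal (hpos : ∀ i, 0 ≤ h i)
    (hH : Tendsto (fun k => ∑ i ∈ range k, h i) atTop atTop)
    (hδ : Tendsto (fun k => h k / ∑ i ∈ range (k + 1), h i) atTop (𝓝 0)) (hW : StrictMono W)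
    (hgap : Tendsto (fun j => W (j + 1) - W j) atTop atTop)
    (hc : ∀ j, c j ∈ Ico (W j) (W (j + 1)))
    (hmin : ∀ j, ∀ i ∈ Ico (W j) (W (j + 1)), h (c j) ≤ h i) :
    Set.Iio (W 0) ∪ Set.range c ∈ erdosUlamIdeal h := by
  set C := Set.Iio (W 0) ∪ Set.range c
  set H := fun k => ∑ i ∈ range k, h i
  have hHmono := monotone_sum_range hpos
  refine mem_erdosUlamIdeal_of_forall_le hpos hH fun ε hε => ?_
  obtain ⟨L, hL⟩ := exists_nat_gt (2 / ε)
  obtain ⟨I₀, hI₀⟩ := eventually_atTop.1 (eventually_le_mul_sum_range_succ hH hδ (half_pos hε))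
  obtain ⟨j₀, hj₀⟩ := eventually_atTop.1
    ((hgap.eventually_ge_atTop L).and (hW.tendsto_atTop.eventually_ge_atTop I₀))
  refine ⟨H (W j₀), W j₀, fun k hk => ?_⟩
  obtain ⟨t, hWt, hkt⟩ := exists_mem_block hW ((hW.monotone (Nat.zero_le j₀)).trans hk)
  have hj₀t : j₀ ≤ t := Nat.le_of_lt_succ (hW.lt_iff_lt.1 (hk.trans_lt hkt))
  have hHk : 0 ≤ H k := sum_nonneg fun i _ => hpos i
  have hhead : ∑ i ∈ range (W j₀), C.indicator h i ≤ H (W j₀) :=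
    sum_le_sum fun i _ => Set.indicator_le_self' (fun i _ => hpos i) i
  have hcomplete : ∑ i ∈ Ico (W j₀) (W t), C.indicator h i ≤ ε / 2 * H k := by
    have hmul := mul_sum_indicator_le hpos hW hc hmin (fun j hj => (hj₀ j hj).1) hj₀t
    have hsub : ∑ i ∈ Ico (W j₀) (W t), h i ≤ H k :=
      sum_le_sum_of_subset_of_nonneg (fun i hi => mem_range.2 ((mem_Ico.1 hi).2.trans_le hWt))
        fun i _ _ => hpos i
    have hL' : 2 < L * ε := (div_lt_iff₀ hε).1 hL
    nlinarith [sum_nonneg fun i (_ : i ∈ Ico (W j₀) (W t)) =>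
      Set.indicator_nonneg (s := C) (fun i _ => hpos i) i]
  have hpartial : ∑ i ∈ Ico (W t) k, C.indicator h i ≤ ε / 2 * H k := by
    rcases hWt.eq_or_lt with hk' | hk'
    · subst hk'
      simpa using mul_nonneg (half_pos hε).le hHk
    calc ∑ i ∈ Ico (W t) k, C.indicator h i ≤ h (c t) :=
          sum_indicator_le_of_subset_block hpos hW hc (Ico_subset_Ico_right hkt.le)
      _ ≤ h (W t) := hmin t (W t) (mem_Ico.2 ⟨le_rfl, hW (Nat.lt_succ_self t)⟩)
      _ ≤ ε / 2 * H (W t + 1) := hI₀ _ (hj₀ t hj₀t).2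
      _ ≤ ε / 2 * H k := by gcongr; exact hHmono hk'
  rw [← sum_range_add_sum_Ico _ hk, ← sum_Ico_consecutive _ (hW.monotone hj₀t) hWt]
  linarith

end erdosUlamIdeal

theorem exists_mem_erdosUlamIdeal_cnt_le {h : ℕ → ℝ} (hpos : ∀ i, 0 ≤ h i)
    (hH : Tendsto (fun k => ∑ i ∈ range k, h i) atTop atTop)
    (hδ : Tendsto (fun k => h k / ∑ i ∈ range (k + 1), h i) atTop (𝓝 0)) {B : Set ℕ}
    (hB : Tendsto (fun k => (cnt B k : ℝ) / k) atTop (𝓝 0)) :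
    ∃ C ∈ erdosUlamIdeal h, ∀ k, cnt B k ≤ cnt C k := by
  obtain ⟨g, hg, hgt, hgB⟩ := exists_monotone_tendsto_mul_le (u := fun k => 2 * cnt B k)
    (by simpa [mul_div_assoc] using hB.const_mul 2)
  obtain ⟨N, hN⟩ := (hgt.eventually_ge_atTop 1).exists
  have hW := blockSeq_strictMono hg hN
  choose c hc hmin using fun j => exists_min_image (Ico (blockSeq g N j) (blockSeq g N (j + 1))) h
    (nonempty_Ico.2 (hW j.lt_succ_self))
  exact ⟨_, Iio_union_range_mem_erdosUlamIdeal hpos hH hδ hW (tendsto_blockSeq_gap hg hgt hN)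
    hc hmin, cnt_le_cnt_Iio_union_range hW hc (cnt_blockSeq_succ_le hg hN hgB)⟩

theorem stmt19_general (f : ℝ → ℝ) (hf : IsModulus f)
    (I : Set (Set ℕ)) (hEU : IsEU I) (hinc : IncreasingInvariant I) :
    {C : Set ℕ | Tendsto (fun k => f (cnt C k) / f (k : ℝ)) atTop (nhds 0)} ⊆ I := by
  intro B hB
  obtain ⟨h, hpos, hH, hδ, rfl⟩ := hEU
  obtain ⟨C, hC, hBC⟩ := exists_mem_erdosUlamIdeal_cnt_le hpos hH hδ (hf.tendsto_cnt_div hB)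
  exact hinc C hC B hBC

theorem stmt19 (f : ℝ → ℝ) (hf : IsModulus f) (hfu : IsUnboundedMod f)
    (I : Set (Set ℕ)) (hI : IsIdeal I) (hEU : IsEU I) (hinc : IncreasingInvariant I) :
    {C : Set ℕ | Tendsto (fun k => f (cnt C k) / f (k : ℝ)) atTop (nhds 0)} ⊆ I :=
  stmt19_general f hf I hEU hinc
end
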